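/- In the setting of the two-layer network with Huberized ReLU activations and logistic loss, suppose additionally that x_s · x_q ≥ 0 for all pairs s, q, that h = 1/p, and bias terms are zero. If C₁ is a sufficiently large absolute constant, n ≥ 2, and L(V) ≤ 1/n^{1+C₁}, then ‖∇_V L(V)‖ ≥ (5/6) · L(V) · log(1/L(V)) / ‖V‖, where ‖V‖ is the Frobenius norm. -/

import Mathlib

noncomputable def hrelu (h z : ℝ) : ℝ :=
  if z < 0 then 0 else if z ≤ h then z^2/(2*h) else z - h/2

noncomputable def hrelu' (h z : ℝ) : ℝ :=
  if z < 0 then 0 else if z ≤ h then z/h else 1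

/-- output of the two-layer network with hidden weights `V` on input `xx` -/
noncomputable def netOut (p d : ℕ) (h : ℝ) (u : Fin (2*p) → ℝ)
    (V : Fin (2*p) → EuclideanSpace ℝ (Fin d))
    (xx : EuclideanSpace ℝ (Fin d)) : ℝ :=
  ∑ i, u i * hrelu h (inner ℝ (V i) xx)

/-- average logistic training loss -/
noncomputable def trainLoss (p n d : ℕ) (h : ℝ) (u : Fin (2*p) → ℝ)
    (x : Fin n → EuclideanSpace ℝ (Fin d)) (y : Fin n → ℝ)
    (V : Fin (2*p) → EuclideanSpace ℝ (Fin d)) : ℝ :=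
  (1 / (n : ℝ)) * ∑ s, Real.log (1 + Real.exp (-(y s) * netOut p d h u V (x s)))

/-- gradient of the loss with respect to the row `v_i` -/
noncomputable def lossGradRow (p n d : ℕ) (h : ℝ) (u : Fin (2*p) → ℝ)
    (x : Fin n → EuclideanSpace ℝ (Fin d)) (y : Fin n → ℝ)
    (V : Fin (2*p) → EuclideanSpace ℝ (Fin d)) (i : Fin (2*p)) :
    EuclideanSpace ℝ (Fin d) :=
  (-(u i) / (n : ℝ)) • ∑ s,
    (hrelu' h (inner ℝ (V i) (x s)) * y s /
      (1 + Real.exp (y s * netOut p d h u V (x s)))) • x s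

/-!
The Huberized ReLU satisfies the approximate Euler identity `0 ≤ φ'(z) z - φ(z) ≤ h / 2`, so for
`h = 1/p` the radial derivative `∑ᵢ uᵢ φ'(vᵢ·x) (vᵢ·x)` of the network differs from `f_V(x)` by at
most `1`. Pairing the gradient with `V` then gives `-⟪V, ∇L⟫ ≥ (1/n) ∑ₛ (aₛ - 1) / (1 + exp aₛ)` for
the margins `aₛ = yₛ f_V(xₛ)`, and Cauchy–Schwarz bounds the left side by `‖V‖ ‖∇L‖`.
With `C₁ = 50`, a loss below `n^(-51)` forces every margin above `16 + 10 log n` and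
`log (1/L) ≤ aₛ + 2 log n`; together with `log (1 + e^(-a)) ≤ e^(-a)` this makes each sample's
term at least `(5/6) log (1 + e^(-aₛ)) log (1/L)`.
-/

open Real Finset

lemma abs_sum_inner_le_sqrt_mul_sqrt {ι E : Type*} [Fintype ι] [NormedAddCommGroup E]
    [InnerProductSpace ℝ E] (f g : ι → E) :
    |∑ i, inner ℝ (f i) (g i)| ≤ √(∑ i, ‖f i‖ ^ 2) * √(∑ i, ‖g i‖ ^ 2) := by
  simpa [PiLp.inner_apply, PiLp.norm_eq_of_L2] using
    abs_real_inner_le_norm (WithLp.toLp 2 f : PiLp 2 fun _ : ι => E) (WithLp.toLp 2 g)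

lemma le_two_mul_log_one_add {x : ℝ} (h0 : 0 ≤ x) (h2 : x ≤ 2) : x ≤ 2 * log (1 + x) := by
  have hlog := le_log_one_add_of_nonneg h0
  have hx : x / 2 ≤ 2 * x / (x + 2) := by
    rw [div_le_div_iff₀ (by norm_num) (by linarith)]; nlinarith
  linarith

lemma log_one_add_exp_neg_pos (a : ℝ) : 0 < log (1 + exp (-a)) :=
  log_pos (by linarith [exp_pos (-a)])

lemma log_one_add_exp_neg_le_exp_neg (a : ℝ) : log (1 + exp (-a)) ≤ exp (-a) := by
  linarith [log_le_sub_one_of_pos (by positivity : 0 < 1 + exp (-a))]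

lemma log_one_add_exp_neg_le_log_two_iff (a : ℝ) : log (1 + exp (-a)) ≤ log 2 ↔ 0 ≤ a := by
  rw [log_le_log_iff (by positivity) two_pos, show (2 : ℝ) = 1 + 1 by norm_num,
    add_le_add_iff_left, exp_le_one_iff, neg_nonpos]

lemma margin_ge_of_log_one_add_exp_neg_le {n a : ℝ} (hn : 2 ≤ n)
    (h : log (1 + exp (-a)) ≤ 1 / n ^ 50) : 16 + 10 * log n ≤ a := by
  have hlog2 := log_two_gt_d9
  have hlogn : log 2 ≤ log n := log_le_log two_pos hn
  have ha : 0 ≤ a := by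
    rw [← log_one_add_exp_neg_le_log_two_iff]
    refine h.trans ((one_div_le_one_div_of_le (by norm_num)
      (pow_le_pow_left₀ two_pos.le hn 50)).trans ?_)
    linarith [show (1 : ℝ) / 2 ^ 50 ≤ 0.6931471803 by norm_num]
  have ht : exp (-a) ≤ 2 / n ^ 50 := by
    have := le_two_mul_log_one_add (exp_pos (-a)).le
      ((exp_le_one_iff.mpr (neg_nonpos.mpr ha)).trans one_le_two)
    linarith [show 2 * (1 / n ^ 50) = 2 / n ^ 50 by ring]
  have hlog := log_le_log (exp_pos _) ht
  rw [log_exp, log_div two_ne_zero (by positivity), log_pow] at hlog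
  push_cast at hlog
  linarith

lemma log_inv_le_margin_add {n a L : ℝ} (hn : 2 ≤ n) (ha : 0 ≤ a) (hL : 0 < L)
    (h : log (1 + exp (-a)) ≤ n * L) : log (1 / L) ≤ a + 2 * log n := by
  have ht : exp (-a) ≤ 2 * (n * L) :=
    (le_two_mul_log_one_add (exp_pos (-a)).le
      ((exp_le_one_iff.mpr (neg_nonpos.mpr ha)).trans one_le_two)).trans (by linarith)
  have hinv : 1 / L ≤ 2 * n * exp a := by
    rw [exp_neg] at ht
    rw [div_le_iff₀ hL]
    have := (inv_le_iff_one_le_mul₀ (exp_pos a)).mp ht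
    linarith
  calc log (1 / L) ≤ log (2 * n * exp a) := log_le_log (by positivity) hinv
    _ = log 2 + log n + a := by
      rw [log_mul (by positivity) (exp_pos a).ne', log_mul two_ne_zero (by positivity), log_exp]
    _ ≤ a + 2 * log n := by linarith [log_le_log two_pos hn]

lemma five_sixths_mul_log_one_add_exp_neg_mul_le {a c D : ℝ} (hc : 0 ≤ c)
    (ha : 16 + 10 * c ≤ a) (hD0 : 0 ≤ D) (hD : D ≤ a + 2 * c) :
    5 / 6 * log (1 + exp (-a)) * D ≤ (a - 1) / (1 + exp a) := by
  set t := exp (-a) with ht_def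
  have ht : 0 < t := exp_pos _
  have hta : t * a ≤ 1 := by
    calc t * a ≤ t * exp a := mul_le_mul_of_nonneg_left (by linarith [add_one_le_exp a]) ht.le
      _ = 1 := by rw [ht_def, ← exp_add, neg_add_cancel, exp_zero]
  have htc : t * (2 * c) ≤ 1 := (mul_le_mul_of_nonneg_left (by linarith) ht.le).trans hta
  have hweight : (a - 1) / (1 + exp a) = (a - 1) * t / (1 + t) := by
    rw [ht_def, exp_neg]; field_simp; ring
  have key : 5 / 6 * (t * (a + 2 * c)) * (1 + t) ≤ (a - 1) * t := by
    have : 5 / 6 * ((a + 2 * c) * (1 + t)) ≤ a - 1 := by nlinarith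
    nlinarith
  calc 5 / 6 * log (1 + t) * D ≤ 5 / 6 * t * (a + 2 * c) := by
        gcongr
        exact log_one_add_exp_neg_le_exp_neg a
    _ ≤ (a - 1) * t / (1 + t) := by rw [le_div_iff₀ (by positivity)]; linarith
    _ = (a - 1) / (1 + exp a) := hweight.symm

noncomputable def avgLogisticLoss {n : ℕ} (a : Fin n → ℝ) : ℝ :=
  (1 / (n : ℝ)) * ∑ s, log (1 + exp (-a s))

theorem five_sixths_mul_avgLogisticLoss_mul_log_le {n : ℕ} (hn : 2 ≤ n) (a : Fin n → ℝ)
    (hL : avgLogisticLoss a ≤ 1 / (n : ℝ) ^ 51) :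
    5 / 6 * avgLogisticLoss a * log (1 / avgLogisticLoss a) ≤
      (1 / (n : ℝ)) * ∑ s, (a s - 1) / (1 + exp (a s)) := by
  set L := avgLogisticLoss a
  have hn' : (2 : ℝ) ≤ n := by exact_mod_cast hn
  have hn0 : (0 : ℝ) < n := by linarith
  have hlogn : 0 ≤ log n := log_nonneg (by linarith)
  have hℓ : ∀ s, log (1 + exp (-a s)) ≤ n * L := fun s => by
    rw [show (n : ℝ) * L = ∑ q, log (1 + exp (-a q)) by
      simp only [L, avgLogisticLoss]; field_simp]
    exact single_le_sum (fun q _ => (log_one_add_exp_neg_pos (a q)).le) (mem_univ s)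
  have hLpos : 0 < L := by
    have := (log_one_add_exp_neg_pos (a ⟨0, by omega⟩)).trans_le (hℓ ⟨0, by omega⟩)
    exact pos_of_mul_pos_right this hn0.le
  have hnL : n * L ≤ 1 / (n : ℝ) ^ 50 := by
    calc (n : ℝ) * L ≤ n * (1 / n ^ 51) := by gcongr
      _ = 1 / (n : ℝ) ^ 50 := by field_simp
  have hmargin : ∀ s, 16 + 10 * log n ≤ a s := fun s =>
    margin_ge_of_log_one_add_exp_neg_le hn' ((hℓ s).trans hnL)
  have hD0 : 0 ≤ log (1 / L) := by
    refine log_nonneg ?_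
    rw [le_div_iff₀ hLpos, one_mul]
    exact hL.trans (div_le_one_of_le₀ (one_le_pow₀ (by linarith)) (by positivity))
  calc 5 / 6 * L * log (1 / L)
        = (1 / (n : ℝ)) * ∑ s, 5 / 6 * log (1 + exp (-a s)) * log (1 / L) := by
        simp only [L, avgLogisticLoss, mul_sum, sum_mul]
        exact sum_congr rfl fun s _ => by ring
    _ ≤ (1 / (n : ℝ)) * ∑ s, (a s - 1) / (1 + exp (a s)) := by
        gcongr with s
        exact five_sixths_mul_log_one_add_exp_neg_mul_le hlogn (hmargin s) hD0
          (log_inv_le_margin_add hn' (by linarith [hmargin s]) hLpos (hℓ s))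

lemma abs_hrelu'_mul_sub_hrelu_le {h : ℝ} (hh : 0 < h) (z : ℝ) :
    |hrelu' h z * z - hrelu h z| ≤ h / 2 := by
  unfold hrelu hrelu'
  split_ifs with hneg hle
  · simp only [zero_mul, sub_zero, abs_zero]; positivity
  · have e : z / h * z - z ^ 2 / (2 * h) = z ^ 2 / (2 * h) := by field_simp; ring
    rw [e, abs_of_nonneg (by positivity), div_le_div_iff₀ (by positivity) two_pos]
    nlinarith
  · rw [show 1 * z - (z - h / 2) = h / 2 by ring, abs_of_pos (by positivity)]

/-- `∑ᵢ uᵢ φ'(vᵢ·x) (vᵢ·x)`, the derivative of `t ↦ f_{tV}(x)` at `t = 1`. -/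
noncomputable def netOutRadial (p d : ℕ) (h : ℝ) (u : Fin (2*p) → ℝ)
    (V : Fin (2*p) → EuclideanSpace ℝ (Fin d)) (xx : EuclideanSpace ℝ (Fin d)) : ℝ :=
  ∑ i, u i * (hrelu' h (inner ℝ (V i) xx) * inner ℝ (V i) xx)

lemma abs_netOutRadial_sub_netOut_le {p d : ℕ} {h : ℝ} (hh : 0 < h) {u : Fin (2*p) → ℝ}
    (hu : ∀ i, |u i| ≤ 1) (V : Fin (2*p) → EuclideanSpace ℝ (Fin d))
    (xx : EuclideanSpace ℝ (Fin d)) :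
    |netOutRadial p d h u V xx - netOut p d h u V xx| ≤ p * h := by
  rw [netOutRadial, netOut, ← sum_sub_distrib]
  calc |∑ i, (u i * (hrelu' h (inner ℝ (V i) xx) * inner ℝ (V i) xx)
          - u i * hrelu h (inner ℝ (V i) xx))|
      ≤ ∑ _i : Fin (2*p), h / 2 := by
        refine (abs_sum_le_sum_abs _ _).trans (sum_le_sum fun i _ => ?_)
        rw [← mul_sub, abs_mul]
        exact (mul_le_of_le_one_left (abs_nonneg _) (hu i)).trans
          (abs_hrelu'_mul_sub_hrelu_le hh _)
    _ = p * h := by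
        simp only [sum_const, card_univ, Fintype.card_fin, nsmul_eq_mul]; push_cast; ring

lemma sum_inner_lossGradRow (p n d : ℕ) (h : ℝ) (u : Fin (2*p) → ℝ)
    (x : Fin n → EuclideanSpace ℝ (Fin d)) (y : Fin n → ℝ)
    (V : Fin (2*p) → EuclideanSpace ℝ (Fin d)) :
    ∑ i, inner ℝ (V i) (lossGradRow p n d h u x y V i) =
      -(1 / (n : ℝ)) * ∑ s, y s * netOutRadial p d h u V (x s) /
        (1 + exp (y s * netOut p d h u V (x s))) := by
  simp only [lossGradRow, netOutRadial, real_inner_smul_right, inner_sum, mul_sum,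
    sum_div]
  rw [sum_comm]
  exact sum_congr rfl fun s _ => sum_congr rfl fun i _ => by ring

theorem stmt_12 :
    ∃ C₁ : ℝ, 0 < C₁ ∧
      ∀ (p n d : ℕ) (h : ℝ) (u : Fin (2*p) → ℝ)
        (x : Fin n → EuclideanSpace ℝ (Fin d)) (y : Fin n → ℝ)
        (V : Fin (2*p) → EuclideanSpace ℝ (Fin d)),
        1 ≤ p → 2 ≤ n →
        h = 1 / (p : ℝ) →
        (∀ i : Fin (2*p), u i = if (i : ℕ) < p then 1 else -1) →
        (∀ s, ‖x s‖ = 1) →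
        (∀ s q, (0:ℝ) ≤ inner ℝ (x s) (x q)) →
        (∀ s, y s = 1 ∨ y s = -1) →
        trainLoss p n d h u x y V ≤ 1 / (n : ℝ) ^ ((1:ℝ) + C₁) →
        Real.sqrt (∑ i, ‖lossGradRow p n d h u x y V i‖^2) ≥
          (5/6) * trainLoss p n d h u x y V *
            Real.log (1 / trainLoss p n d h u x y V) /
            Real.sqrt (∑ i, ‖V i‖^2) := by
  refine ⟨50, by norm_num, ?_⟩
  intro p n d h u x y V hp hn hh hu _ _ hy hL
  set a : Fin n → ℝ := fun s => y s * netOut p d h u V (x s)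
  have hloss : trainLoss p n d h u x y V = avgLogisticLoss a := by
    simp only [trainLoss, avgLogisticLoss, a, neg_mul]
  have hh0 : 0 < h := by rw [hh]; positivity
  have hph : (p : ℝ) * h = 1 := by rw [hh]; field_simp
  have hu1 : ∀ i, |u i| ≤ 1 := fun i => by rw [hu i]; split_ifs <;> norm_num
  have hmargin : ∀ s, a s - 1 ≤ y s * netOutRadial p d h u V (x s) := fun s => by
    have := abs_le.mp (abs_netOutRadial_sub_netOut_le hh0 hu1 V (x s))
    rcases hy s with hys | hys <;> simp only [a, hys] <;> linarith
  have hgrad : (1 / (n : ℝ)) * ∑ s, (a s - 1) / (1 + exp (a s)) ≤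
      √(∑ i, ‖V i‖ ^ 2) * √(∑ i, ‖lossGradRow p n d h u x y V i‖ ^ 2) :=
    calc (1 / (n : ℝ)) * ∑ s, (a s - 1) / (1 + exp (a s))
        ≤ (1 / (n : ℝ)) * ∑ s, y s * netOutRadial p d h u V (x s) / (1 + exp (a s)) := by
          gcongr with s; exact hmargin s
      _ = -∑ i, inner ℝ (V i) (lossGradRow p n d h u x y V i) := by
          rw [sum_inner_lossGradRow]; ring
      _ ≤ _ := (neg_le_abs _).trans (abs_sum_inner_le_sqrt_mul_sqrt _ _)
  have hL51 : avgLogisticLoss a ≤ 1 / (n : ℝ) ^ 51 := by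
    rwa [← hloss, ← Real.rpow_natCast, show ((51 : ℕ) : ℝ) = 1 + 50 by norm_num]
  rw [hloss, ge_iff_le]
  exact div_le_of_le_mul₀ (sqrt_nonneg _) (sqrt_nonneg _) <| by
    linarith [five_sixths_mul_avgLogisticLoss_mul_log_le hn a hL51]
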